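/- Let m > 0 and k ∈ ℝ, and consider the 1-dimensional inverse square potential system with Hamiltonian H(q, p) = p²/(2m) − k/q². Along every differentiable curve (q(t), p(t)) on an interval I with q(t) ≠ 0 solving Hamilton's equations q̇ = p/m, ṗ = −2k/q³, one has d/dt (p(t) q(t)) = 2 H(q(t), p(t)); consequently, since H(q(t), p(t)) is constant with some value E on I, the time-dependent quantity p(t) q(t) − 2 E t is constant on I. -/

import Mathlib

/-- For the 1-dimensional inverse square potential system `H(q,p) = p²/(2m) − k/q²`
(`q̇ = p/m`, `ṗ = −2k/q³`, with `q ≠ 0`): one has `d/dt (p q) = 2 H(q,p)`; consequently,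
since `H` is constant with some value `E` along the solution, the time-dependent quantity
`p q − 2 E t` is constant. -/
theorem inverse_square_time_dependent_conserved
    (m k : ℝ) (hm : 0 < m)
    (I : Set ℝ) (hI : Convex ℝ I)
    (q p : ℝ → ℝ)
    (hq0 : ∀ t ∈ I, q t ≠ 0)
    (hq : ∀ t ∈ I, HasDerivAt q (p t / m) t)
    (hp : ∀ t ∈ I, HasDerivAt p (-(2 * k / (q t)^3)) t) :
    (∀ t ∈ I, HasDerivAt (fun s => p s * q s)
      (2 * ((p t)^2 / (2 * m) - k / (q t)^2)) t) ∧
    (∀ E : ℝ, (∀ t ∈ I, (p t)^2 / (2 * m) - k / (q t)^2 = E) →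
      ∀ s ∈ I, ∀ t ∈ I, p s * q s - 2 * E * s = p t * q t - 2 * E * t) := by
  have key : ∀ t ∈ I, HasDerivAt (fun s => p s * q s)
      (2 * ((p t)^2 / (2 * m) - k / (q t)^2)) t := by
    intro t ht
    have h : HasDerivAt (fun s => p s * q s) _ t := (hp t ht).mul (hq t ht)
    convert h using 1
    have hq0t := hq0 t ht
    field_simp [hm.ne']
    ring
  refine ⟨key, fun E hE s hs t ht => ?_⟩
  have hderiv : ∀ u ∈ I, HasDerivWithinAt (fun s => p s * q s - 2 * E * s) 0 I u := by
    intro u hu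
    have h1 : HasDerivAt (fun s => p s * q s - 2 * E * s) (2 * E - 2 * E) u := by
      have : HasDerivAt (fun s => p s * q s - 2 * E * s) _ u :=
        (key u hu).sub ((hasDerivAt_id u).const_mul (2 * E))
      simpa [hE u hu, mul_one] using this
    simpa using h1.hasDerivWithinAt
  have hconst := fun u hu => (hderiv u hu)
  have := hI.norm_image_sub_le_of_norm_hasDerivWithin_le (C := 0)
    (fun u hu => hconst u hu) (fun u hu => by simp) hs ht
  have h0 : ‖(p t * q t - 2 * E * t) - (p s * q s - 2 * E * s)‖ ≤ 0 := by
    simpa using this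
  have := norm_le_zero_iff.mp h0
  linarith [sub_eq_zero.mp this]
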